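/- Let s be a binary sequence that is not ultimately periodic, with factor complexity p_s(N) counting the number of distinct factors of length N. Then for every k ≥ 1 and every N ≥ 1, within the prefix of length k·p_s(N) + N of s there is a factor of length N occurring at least k+1 times; consequently C_{2}(s, (k+1)·(p_s(N)+N)) ≥ N for k = 1, and more generally C_{2k}(s, 2k·(p_s(N)+N)) ≥ N. -/

import Mathlib

/-!
Among the `m * p_s(N) + 1` windows of length `N` starting at `0, 1, …, m * p_s(N)` only
`p_s(N)` distinct words occur, so by pigeonhole one word occurs at `m + 1` of these positions.
Taking `m = 2k - 1` and using those `2k` positions as the shifts `D`, every summand of the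
correlation sum of length `N` is `(-1)` to an even power, so the sum equals `N`.
-/

/-- The correlation sum `V(s, M, D)` of a sequence `s`. -/
def corrV (s : ℕ → ℕ) (M : ℕ) {k : ℕ} (D : Fin k → ℕ) : ℤ :=
  ∑ n ∈ Finset.range M, (-1 : ℤ) ^ (∑ i, s (n + D i))

/-- The `N`th correlation measure of order `k` of the sequence `s`. -/
noncomputable def corrMeasure (s : ℕ → ℕ) (k N : ℕ) : ℕ :=
  sSup {c : ℕ | ∃ M : ℕ, ∃ D : Fin k → ℕ, 0 < M ∧ StrictMono D ∧
    (∀ i, M + D i ≤ N) ∧ c = (corrV s M D).natAbs}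

/-- The factor complexity of `s`: the number of distinct length-`N` factors of `s`. -/
noncomputable def factComp (s : ℕ → ℕ) (N : ℕ) : ℕ :=
  Set.ncard {w : Fin N → ℕ | ∃ i : ℕ, ∀ j : Fin N, w j = s (i + (j : ℕ))}

lemma factors_finite {s : ℕ → ℕ} {b : ℕ} (hs : ∀ n, s n ≤ b) (N : ℕ) :
    {w : Fin N → ℕ | ∃ i : ℕ, ∀ j : Fin N, w j = s (i + (j : ℕ))}.Finite := by
  refine (Set.Finite.pi fun _ : Fin N => Set.finite_Iic b).subset ?_
  rintro w ⟨i, hi⟩ j -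
  simpa only [Set.mem_Iic, hi j] using hs _

lemma exists_strictMono_factor_repeats {s : ℕ → ℕ} {b : ℕ} (hs : ∀ n, s n ≤ b) (N m : ℕ) :
    ∃ t : Fin (m + 1) → ℕ, StrictMono t ∧ (∀ i, t i ≤ m * factComp s N) ∧
      ∀ i j : Fin (m + 1), ∀ n < N, s (t i + n) = s (t j + n) := by
  classical
  have hF := factors_finite hs N
  have hmaps : ∀ a ∈ Finset.range (m * factComp s N + 1),
      (fun j : Fin N => s (a + (j : ℕ))) ∈ hF.toFinset :=
    fun a _ => hF.mem_toFinset.mpr ⟨a, fun _ => rfl⟩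
  have hlt : hF.toFinset.card * m < (Finset.range (m * factComp s N + 1)).card := by
    rw [Finset.card_range, ← Set.ncard_eq_toFinset_card _ hF, mul_comm]
    exact Nat.lt_succ_self _
  obtain ⟨w, -, hw⟩ := Finset.exists_lt_card_fiber_of_mul_lt_card_of_maps_to hmaps hlt
  set T := (Finset.range (m * factComp s N + 1)).filter
    (fun a => (fun j : Fin N => s (a + (j : ℕ))) = w)
  have hT : m + 1 ≤ T.card := hw
  have hmem (i) : T.orderEmbOfCardLe hT i < m * factComp s N + 1 ∧
      (fun j : Fin N => s (T.orderEmbOfCardLe hT i + (j : ℕ))) = w := by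
    simpa only [T, Finset.mem_filter, Finset.mem_range] using T.orderEmbOfCardLe_mem hT i
  refine ⟨T.orderEmbOfCardLe hT, (T.orderEmbOfCardLe hT).strictMono,
    fun i => Nat.lt_succ_iff.mp (hmem i).1, fun i j n hn => ?_⟩
  exact congrFun ((hmem i).2.trans (hmem j).2.symm) ⟨n, hn⟩

lemma natAbs_corrV_le (s : ℕ → ℕ) (M : ℕ) {k : ℕ} (D : Fin k → ℕ) :
    (corrV s M D).natAbs ≤ M := by
  have h : |corrV s M D| ≤ M :=
    calc |corrV s M D|
        ≤ ∑ n ∈ Finset.range M, |(-1 : ℤ) ^ (∑ i, s (n + D i))| :=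
          Finset.abs_sum_le_sum_abs _ _
      _ = M := by simp
  rw [Int.abs_eq_natAbs] at h
  exact_mod_cast h

lemma corrV_eq_of_even {s : ℕ → ℕ} {M k : ℕ} (hk : Even k) {D : Fin k → ℕ}
    (hD : ∀ n < M, ∀ i j, s (n + D i) = s (n + D j)) :
    corrV s M D = M := by
  rcases Nat.eq_zero_or_pos k with rfl | hpos
  · simp [corrV]
  have hterm : ∀ n ∈ Finset.range M, (-1 : ℤ) ^ (∑ i, s (n + D i)) = 1 := by
    intro n hn
    rw [Finset.sum_congr rfl fun i _ => hD n (Finset.mem_range.mp hn) i ⟨0, hpos⟩,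
      Finset.sum_const, Finset.card_univ, Fintype.card_fin, smul_eq_mul]
    exact (hk.mul_right _).neg_one_pow
  simp [corrV, Finset.sum_congr rfl hterm]

lemma corrMeasure_bddAbove (s : ℕ → ℕ) {k : ℕ} (hk : 0 < k) (N : ℕ) :
    BddAbove {c : ℕ | ∃ M : ℕ, ∃ D : Fin k → ℕ, 0 < M ∧ StrictMono D ∧
      (∀ i, M + D i ≤ N) ∧ c = (corrV s M D).natAbs} := by
  refine ⟨N, ?_⟩
  rintro c ⟨M, D, -, -, hle, rfl⟩
  have := hle ⟨0, hk⟩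
  have := natAbs_corrV_le s M D
  omega

lemma natAbs_corrV_le_corrMeasure (s : ℕ → ℕ) {k M N : ℕ} (hk : 0 < k) (hM : 0 < M)
    {D : Fin k → ℕ} (hD : StrictMono D) (hle : ∀ i, M + D i ≤ N) :
    (corrV s M D).natAbs ≤ corrMeasure s k N :=
  le_csSup (corrMeasure_bddAbove s hk N) ⟨M, D, hM, hD, hle, rfl⟩

theorem stmt6_general (s : ℕ → ℕ) (hbin : ∀ n, s n ≤ 1)
    (k N : ℕ) (hk : 1 ≤ k) (hN : 1 ≤ N) :
    (∃ t : Fin (k + 1) → ℕ, StrictMono t ∧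
      (∀ i, t i + N ≤ k * factComp s N + N) ∧
      ∀ i j : Fin (k + 1), ∀ n < N, s (t i + n) = s (t j + n)) ∧
    N ≤ corrMeasure s (2 * k) (2 * k * (factComp s N + N)) := by
  refine ⟨?_, ?_⟩
  · obtain ⟨t, ht, hle, heq⟩ := exists_strictMono_factor_repeats hbin N k
    exact ⟨t, ht, fun i => Nat.add_le_add_right (hle i) N, heq⟩
  · have h2k : 2 * k - 1 + 1 = 2 * k := by omega
    obtain ⟨t, ht, hle, heq⟩ := exists_strictMono_factor_repeats hbin N (2 * k - 1)
    set D : Fin (2 * k) → ℕ := t ∘ Fin.castOrderIso h2k.symm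
    have hD : StrictMono D := ht.comp (Fin.castOrderIso h2k.symm).strictMono
    have hDle (i) : N + D i ≤ 2 * k * (factComp s N + N) :=
      calc N + D i ≤ 2 * k * N + (2 * k - 1) * factComp s N :=
            Nat.add_le_add (Nat.le_mul_of_pos_left N (by omega)) (hle _)
        _ ≤ 2 * k * N + 2 * k * factComp s N := by gcongr; omega
        _ = 2 * k * (factComp s N + N) := by ring
    have hV : corrV s N D = N :=
      corrV_eq_of_even (even_two_mul k) fun n hn i j => by
        rw [add_comm n, add_comm n]
        exact heq _ _ n hn
    simpa [hV] using natAbs_corrV_le_corrMeasure s (by omega) hN hD hDle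

/-- For a non-ultimately-periodic binary sequence `s`, within the prefix of length
`k·p_s(N)+N` some length-`N` factor occurs at least `k+1` times; consequently
`C_{2k}(s, 2k(p_s(N)+N)) ≥ N`. -/
theorem stmt6 (s : ℕ → ℕ) (hbin : ∀ n, s n ≤ 1)
    (hnp : ¬ ∃ p N₀ : ℕ, 0 < p ∧ ∀ n ≥ N₀, s (n + p) = s n)
    (k N : ℕ) (hk : 1 ≤ k) (hN : 1 ≤ N) :
    (∃ t : Fin (k + 1) → ℕ, StrictMono t ∧
      (∀ i, t i + N ≤ k * factComp s N + N) ∧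
      ∀ i j : Fin (k + 1), ∀ n < N, s (t i + n) = s (t j + n)) ∧
    N ≤ corrMeasure s (2 * k) (2 * k * (factComp s N + N)) :=
  stmt6_general s hbin k N hk hN
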